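/- arXiv:2506.15149 — 2 statements merged into one kernel-verified Lean document; each statement's English description precedes it below -/
import Mathlib

section
/- For A = (a_{ij})_{i,j=1,2} ∈ M₂(ℂ) the following are equivalent: (1) μ_hexa(A) < 1; (2) 1 − a₁₁z₁ − a₂₂z₂ + (det A)·z₁z₂ ≠ a₂₁·w for all z₁, z₂, w ∈ 𝔻̄ with |w| ≤ √((1−|z₁|²)(1−|z₂|²)); (3) (a₁₁, a₂₂, det A) ∈ 𝔼 and sup_{z₁,z₂ ∈ 𝔻} |ψ_{z₁,z₂}(a₂₁, a₁₁, a₂₂, det A)| < 1; (4) (a₁₁, a₂₂, det A) ∈ 𝔼 and |a₂₁|·K_*(a₁₁, a₂₂, det A) < 1. -/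
/-!
For an upper-triangular `X = [[z₁, w], [0, z₂]]` one has
`det (1 - A X) = 1 - a₁₁ z₁ - a₂₂ z₂ + (det A) z₁ z₂ - a₂₁ w`, and `‖X‖ ≤ 1` exactly when
`|z₁|, |z₂| ≤ 1` and `|w|² ≤ (1 - |z₁|²)(1 - |z₂|²)`, the latter being `det (1 - X* X) ≥ 0`.
The upper-triangular solutions of `det (1 - A X) = 0` form a closed set, which has an element of
least norm; hence `μ_hexa(A) < 1` says that no contraction solves the equation, which is (2).
On the tetrablock the ratio `√((1 - |z₁|²)(1 - |z₂|²)) / |1 - a₁₁ z₁ - a₂₂ z₂ + (det A) z₁ z₂|`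
is continuous on the closed bidisc and vanishes on its boundary, so its maximum is `K_*`; if
`|a₂₁| K_* ≥ 1` at a maximiser `ζ`, then `w = (1 - a₁₁ ζ₁ - …) / a₂₁` violates (2), giving
(2) ⇔ (4). Finally `|ψ_{z₁,z₂}| = |a₂₁| · ratio`, so `sup |ψ| = |a₂₁| K_*`, giving (3) ⇔ (4).
-/

noncomputable section

open Complex

/-- The expression `1 - x₁ z₁ - x₂ z₂ + x₃ z₁ z₂`. -/
def hexDen (x : ℂ × ℂ × ℂ) (z₁ z₂ : ℂ) : ℂ :=
  1 - x.1 * z₁ - x.2.1 * z₂ + x.2.2 * z₁ * z₂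

/-- The tetrablock `𝔼 ⊆ ℂ³`. -/
def tetrablock : Set (ℂ × ℂ × ℂ) :=
  {x | ∀ z₁ z₂ : ℂ, ‖z₁‖ ≤ 1 → ‖z₂‖ ≤ 1 → hexDen x z₁ z₂ ≠ 0}

/-- The distinguished boundary `b𝔼` of the tetrablock. -/
def bE : Set (ℂ × ℂ × ℂ) :=
  {x | x.1 = (starRingEnd ℂ) x.2.1 * x.2.2 ∧ ‖x.2.2‖ = 1 ∧ ‖x.2.1‖ ≤ 1}

/-- The linear fractional map `ψ_{z₁,z₂}(a, x₁, x₂, x₃)`. -/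
def psi (z₁ z₂ : ℂ) (q : ℂ × ℂ × ℂ × ℂ) : ℂ :=
  q.1 * ((Real.sqrt ((1 - ‖z₁‖ ^ 2) * (1 - ‖z₂‖ ^ 2)) : ℝ) : ℂ) / hexDen q.2 z₁ z₂

/-- `sup_{z₁,z₂ ∈ 𝔻} |ψ_{z₁,z₂}(q)|`. -/
def supPsi (q : ℂ × ℂ × ℂ × ℂ) : ℝ :=
  sSup {r : ℝ | ∃ z₁ z₂ : ℂ, ‖z₁‖ < 1 ∧ ‖z₂‖ < 1 ∧ r = ‖psi z₁ z₂ q‖}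

/-- The function `K_*` on the tetrablock. -/
def Kstar (x : ℂ × ℂ × ℂ) : ℝ :=
  sSup {r : ℝ | ∃ z₁ z₂ : ℂ, ‖z₁‖ < 1 ∧ ‖z₂‖ < 1 ∧
    r = Real.sqrt ((1 - ‖z₁‖ ^ 2) * (1 - ‖z₂‖ ^ 2)) / ‖hexDen x z₁ z₂‖}

/-- The hexablock `ℍ ⊆ ℂ⁴`. -/
def hexablock : Set (ℂ × ℂ × ℂ × ℂ) :=
  {q | q.2 ∈ tetrablock ∧ supPsi q < 1}

/-- Operator norm of a `2 × 2` complex matrix acting on Euclidean `ℂ²`. -/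
def opNorm2 (A : Matrix (Fin 2) (Fin 2) ℂ) : ℝ :=
  ‖Matrix.toEuclideanCLM (𝕜 := ℂ) A‖

/-- `π(A) = (a₂₁, a₁₁, a₂₂, det A)`. -/
def piMap (A : Matrix (Fin 2) (Fin 2) ℂ) : ℂ × ℂ × ℂ × ℂ :=
  (A 1 0, A 0 0, A 1 1, A.det)

/-- The structured singular value `μ_hexa`, valued in `[0, ∞]`;
the infimum over the empty set is `∞`, whose inverse is `0`. -/
def muHexa (A : Matrix (Fin 2) (Fin 2) ℂ) : ENNReal :=
  (sInf {r : ENNReal | ∃ X : Matrix (Fin 2) (Fin 2) ℂ,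
      X 1 0 = 0 ∧ (1 - A * X).det = 0 ∧ r = ENNReal.ofReal (opNorm2 X)})⁻¹

/-- The μ-hexablock `ℍ_μ`. -/
def hexMu : Set (ℂ × ℂ × ℂ × ℂ) :=
  {q | ∃ A : Matrix (Fin 2) (Fin 2) ℂ, muHexa A < 1 ∧ piMap A = q}

/-- The normed hexablock `ℍ_N`. -/
def hexN : Set (ℂ × ℂ × ℂ × ℂ) :=
  {q | ∃ A : Matrix (Fin 2) (Fin 2) ℂ, opNorm2 A < 1 ∧ piMap A = q}

/-- `ℍ_p = π(𝒰(2))`. -/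
def hexP : Set (ℂ × ℂ × ℂ × ℂ) :=
  {q | ∃ U : Matrix (Fin 2) (Fin 2) ℂ, U ∈ Matrix.unitaryGroup (Fin 2) ℂ ∧ piMap U = q}

/-- Evaluation of a polynomial in four variables at a point of `ℂ⁴`. -/
def evalPoly4 (p : MvPolynomial (Fin 4) ℂ) (q : ℂ × ℂ × ℂ × ℂ) : ℂ :=
  MvPolynomial.eval ![q.1, q.2.1, q.2.2.1, q.2.2.2] p

/-- Polynomial convexity of a subset of `ℂ⁴`. -/
def PolyConvex (K : Set (ℂ × ℂ × ℂ × ℂ)) : Prop :=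
  ∀ z ∉ K, ∃ p : MvPolynomial (Fin 4) ℂ,
    (∀ w ∈ K, ‖evalPoly4 p w‖ ≤ 1) ∧ 1 < ‖evalPoly4 p z‖

/-- Polynomial convex hull of a subset of `ℂ⁴`. -/
def polyHull (K : Set (ℂ × ℂ × ℂ × ℂ)) : Set (ℂ × ℂ × ℂ × ℂ) :=
  {z | ∀ p : MvPolynomial (Fin 4) ℂ,
    ‖evalPoly4 p z‖ ≤ sSup {r : ℝ | ∃ w ∈ K, r = ‖evalPoly4 p w‖}}

/-- The pentablock `𝒫 ⊆ ℂ³`. -/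
def pentablock : Set (ℂ × ℂ × ℂ) :=
  {q | ∃ A : Matrix (Fin 2) (Fin 2) ℂ, opNorm2 A < 1 ∧ (A 1 0, A 0 0 + A 1 1, A.det) = q}

open scoped Matrix.Norms.L2Operator

lemma sq_add_sq_le_sq_add_sq {s v c : ℝ} (hs : 0 ≤ s) (hv : 0 ≤ v) (hs₁ : s ≤ 1) (hv₁ : v ≤ 1)
    (hc : c ^ 2 ≤ (1 - s ^ 2) * (1 - v ^ 2)) (a b : ℝ) :
    (s * a + c * b) ^ 2 + (v * b) ^ 2 ≤ a ^ 2 + b ^ 2 := by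
  rcases hs₁.lt_or_eq with hs₁ | rfl
  · have hpos : 0 < 1 - s ^ 2 := by nlinarith
    refine le_of_mul_le_mul_left ?_ hpos
    -- `(1 - s²) · (gap) = ((1 - s²) a - s c b)² + ((1 - s²)(1 - v²) - c²) b²`
    nlinarith [sq_nonneg ((1 - s ^ 2) * a - s * c * b), mul_nonneg (sub_nonneg.2 hc) (sq_nonneg b)]
  · have : c = 0 := by nlinarith
    subst this
    nlinarith [mul_le_mul_of_nonneg_right (pow_le_one₀ hv hv₁ : v ^ 2 ≤ 1) (sq_nonneg b)]

lemma sqrt_one_sub_sq_mul_one_sub_sq_le_one {s : ℝ} (hs : s ^ 2 ≤ 1) (t : ℝ) :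
    Real.sqrt ((1 - s ^ 2) * (1 - t ^ 2)) ≤ 1 :=
  Real.sqrt_le_one.2 (by nlinarith [mul_nonneg (sub_nonneg.2 hs) (sq_nonneg t), sq_nonneg s])

lemma forall_norm_sq_add_le_iff (z₁ w z₂ : ℂ) :
    (∀ α β : ℂ, ‖α * z₁ + β * w‖ ^ 2 + (‖β‖ * ‖z₂‖) ^ 2 ≤ ‖α‖ ^ 2 + ‖β‖ ^ 2) ↔
      ‖z₁‖ ≤ 1 ∧ ‖z₂‖ ≤ 1 ∧ ‖w‖ ^ 2 ≤ (1 - ‖z₁‖ ^ 2) * (1 - ‖z₂‖ ^ 2) := by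
  constructor
  · intro h
    have h₁ := h 1 0
    have h₂ := h 0 1
    norm_num at h₁ h₂
    -- the test vectors `(conj z₁ * w, s)` make the cross term real
    have key : ∀ s : ℝ, 0 ≤ s →
        ((‖z₁‖ ^ 2 + s) * ‖w‖) ^ 2 + (s * ‖z₂‖) ^ 2 ≤ (‖z₁‖ * ‖w‖) ^ 2 + s ^ 2 := by
      intro s hs
      have e : starRingEnd ℂ z₁ * w * z₁ + s * w = ((‖z₁‖ ^ 2 + s : ℝ) : ℂ) * w := by
        rw [mul_right_comm, Complex.conj_mul']; push_cast; ring
      have := h (starRingEnd ℂ z₁ * w) s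
      rw [e] at this
      simpa only [norm_mul, Complex.norm_conj, Complex.norm_real, Real.norm_of_nonneg hs,
        Real.norm_of_nonneg (by positivity : 0 ≤ ‖z₁‖ ^ 2 + s)] using this
    have hz₁ : ‖z₁‖ ≤ 1 := by nlinarith [norm_nonneg z₁]
    refine ⟨hz₁, by nlinarith [norm_nonneg z₂, sq_nonneg ‖w‖], ?_⟩
    rcases hz₁.lt_or_eq with hz₁ | hz₁
    · have hpos : 0 < 1 - ‖z₁‖ ^ 2 := by nlinarith [norm_nonneg z₁]
      nlinarith [key _ hpos.le]
    · have := key (‖w‖ ^ 2) (sq_nonneg _)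
      rw [hz₁] at this ⊢
      nlinarith [pow_nonneg (norm_nonneg w) 4, pow_nonneg (norm_nonneg w) 6]
  · rintro ⟨hz₁, hz₂, hw⟩ α β
    calc ‖α * z₁ + β * w‖ ^ 2 + (‖β‖ * ‖z₂‖) ^ 2
        ≤ (‖z₁‖ * ‖α‖ + ‖w‖ * ‖β‖) ^ 2 + (‖z₂‖ * ‖β‖) ^ 2 := by
          rw [mul_comm ‖β‖]
          gcongr
          exact (norm_add_le _ _).trans (by rw [norm_mul, norm_mul, mul_comm ‖α‖, mul_comm ‖β‖])
      _ ≤ ‖α‖ ^ 2 + ‖β‖ ^ 2 :=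
          sq_add_sq_le_sq_add_sq (norm_nonneg _) (norm_nonneg _) hz₁ hz₂ hw _ _

lemma norm_upperTriangular_le_one_iff (z₁ w z₂ : ℂ) :
    ‖!![z₁, w; 0, z₂]‖ ≤ 1 ↔
      ‖z₁‖ ≤ 1 ∧ ‖z₂‖ ≤ 1 ∧ ‖w‖ ≤ Real.sqrt ((1 - ‖z₁‖ ^ 2) * (1 - ‖z₂‖ ^ 2)) := by
  have hquad : ‖!![z₁, w; 0, z₂]‖ ≤ 1 ↔
      ∀ α β : ℂ, ‖α * z₁ + β * w‖ ^ 2 + (‖β‖ * ‖z₂‖) ^ 2 ≤ ‖α‖ ^ 2 + ‖β‖ ^ 2 := by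
    rw [← Matrix.l2_opNorm_toEuclideanCLM, ContinuousLinearMap.opNorm_le_iff zero_le_one]
    simp only [one_mul, ← sq_le_sq₀ (norm_nonneg _) (norm_nonneg _), EuclideanSpace.norm_sq_eq]
    constructor
    · intro h α β
      simpa [Fin.sum_univ_two, Matrix.mulVec, dotProduct] using h !₂[α, β]
    · intro h y
      simpa [Fin.sum_univ_two, Matrix.mulVec, dotProduct, mul_comm] using h (y 0) (y 1)
  rw [hquad, forall_norm_sq_add_le_iff]
  refine and_congr_right fun hz₁ => and_congr_right fun hz₂ => ?_
  exact (Real.le_sqrt (norm_nonneg w) (mul_nonneg (by nlinarith [norm_nonneg z₁])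
    (by nlinarith [norm_nonneg z₂]))).symm

lemma det_one_sub_mul_upperTriangular (A : Matrix (Fin 2) (Fin 2) ℂ) (z₁ w z₂ : ℂ) :
    (1 - A * !![z₁, w; 0, z₂]).det = hexDen (A 0 0, A 1 1, A.det) z₁ z₂ - A 1 0 * w := by
  simp [Matrix.det_fin_two, Matrix.mul_apply, Fin.sum_univ_two, hexDen]
  ring

lemma IsClosed.exists_forall_norm_le {E : Type*} [NormedAddCommGroup E] [ProperSpace E]
    {S : Set E} (hS : IsClosed S) (hne : S.Nonempty) : ∃ x₀ ∈ S, ∀ x ∈ S, ‖x₀‖ ≤ ‖x‖ := by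
  obtain ⟨x₀, hx₀, hd⟩ := hS.exists_infDist_eq_dist hne 0
  refine ⟨x₀, hx₀, fun x hx => ?_⟩
  have := Metric.infDist_le_dist_of_mem hx (x := 0)
  rwa [hd, dist_zero_left, dist_zero_left] at this

lemma muHexa_lt_one_iff (A : Matrix (Fin 2) (Fin 2) ℂ) :
    muHexa A < 1 ↔
      ∀ X : Matrix (Fin 2) (Fin 2) ℂ, X 1 0 = 0 → (1 - A * X).det = 0 → 1 < ‖X‖ := by
  set S := {X : Matrix (Fin 2) (Fin 2) ℂ | X 1 0 = 0 ∧ (1 - A * X).det = 0}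
  have hset : {r : ENNReal | ∃ X : Matrix (Fin 2) (Fin 2) ℂ,
      X 1 0 = 0 ∧ (1 - A * X).det = 0 ∧ r = ENNReal.ofReal (opNorm2 X)} =
      (fun X => ENNReal.ofReal ‖X‖) '' S := by
    ext r
    simp [S, opNorm2, Matrix.l2_opNorm_toEuclideanCLM, eq_comm, and_assoc]
  rw [muHexa, ENNReal.inv_lt_one, hset]
  constructor
  · intro h X h₁₀ hdet
    have := h.trans_le (sInf_le ⟨X, ⟨h₁₀, hdet⟩, rfl⟩)
    rwa [← ENNReal.ofReal_one, ENNReal.ofReal_lt_ofReal_iff_of_nonneg zero_le_one] at this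
  · intro h
    rcases S.eq_empty_or_nonempty with hS | hS
    · simp [hS]
    have hclosed : IsClosed S :=
      (isClosed_eq (by fun_prop) continuous_const).inter
        (isClosed_eq (by fun_prop) continuous_const)
    obtain ⟨X₀, hX₀, hmin⟩ := hclosed.exists_forall_norm_le hS
    refine (ENNReal.one_lt_ofReal.2 (h X₀ hX₀.1 hX₀.2)).trans_le (le_sInf ?_)
    rintro _ ⟨X, hX, rfl⟩
    exact ENNReal.ofReal_le_ofReal (hmin X hX)

lemma muHexa_lt_one_iff_forall_hexDen_ne (A : Matrix (Fin 2) (Fin 2) ℂ) :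
    muHexa A < 1 ↔ ∀ z₁ z₂ w : ℂ, ‖z₁‖ ≤ 1 → ‖z₂‖ ≤ 1 →
      ‖w‖ ≤ Real.sqrt ((1 - ‖z₁‖ ^ 2) * (1 - ‖z₂‖ ^ 2)) →
      hexDen (A 0 0, A 1 1, A.det) z₁ z₂ ≠ A 1 0 * w := by
  rw [muHexa_lt_one_iff]
  constructor
  · intro h z₁ z₂ w hz₁ hz₂ hw heq
    have hnorm := h !![z₁, w; 0, z₂] rfl (by rw [det_one_sub_mul_upperTriangular, heq, sub_self])
    exact hnorm.not_ge ((norm_upperTriangular_le_one_iff z₁ w z₂).2 ⟨hz₁, hz₂, hw⟩)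
  · intro h X h₁₀ hdet
    by_contra! hX
    rw [Matrix.eta_fin_two X, h₁₀] at hdet hX
    obtain ⟨hz₁, hz₂, hw⟩ := (norm_upperTriangular_le_one_iff _ _ _).1 hX
    rw [det_one_sub_mul_upperTriangular, sub_eq_zero] at hdet
    exact h _ _ _ hz₁ hz₂ hw hdet

def kstarRatio (x : ℂ × ℂ × ℂ) (z₁ z₂ : ℂ) : ℝ :=
  Real.sqrt ((1 - ‖z₁‖ ^ 2) * (1 - ‖z₂‖ ^ 2)) / ‖hexDen x z₁ z₂‖

lemma norm_psi (z₁ z₂ a : ℂ) (x : ℂ × ℂ × ℂ) : ‖psi z₁ z₂ (a, x)‖ = ‖a‖ * kstarRatio x z₁ z₂ := by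
  rw [psi, norm_div, norm_mul, Complex.norm_real, Real.norm_of_nonneg (Real.sqrt_nonneg _),
    mul_div_assoc, kstarRatio]

lemma supPsi_eq_norm_mul_Kstar (a : ℂ) (x : ℂ × ℂ × ℂ) : supPsi (a, x) = ‖a‖ * Kstar x := by
  rw [supPsi, Kstar, ← smul_eq_mul, ← Real.sSup_smul_of_nonneg (norm_nonneg a)]
  congr 1
  ext r
  simp only [Set.mem_smul_set, norm_psi, smul_eq_mul]
  constructor
  · rintro ⟨z₁, z₂, h₁, h₂, rfl⟩; exact ⟨_, ⟨z₁, z₂, h₁, h₂, rfl⟩, rfl⟩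
  · rintro ⟨_, ⟨z₁, z₂, h₁, h₂, rfl⟩, rfl⟩; exact ⟨z₁, z₂, h₁, h₂, rfl⟩

section
variable {x : ℂ × ℂ × ℂ}

lemma exists_forall_kstarRatio_le (hx : x ∈ tetrablock) :
    ∃ ζ₁ ζ₂ : ℂ, ‖ζ₁‖ ≤ 1 ∧ ‖ζ₂‖ ≤ 1 ∧
      ∀ z₁ z₂ : ℂ, ‖z₁‖ ≤ 1 → ‖z₂‖ ≤ 1 → kstarRatio x z₁ z₂ ≤ kstarRatio x ζ₁ ζ₂ := by
  have hK : IsCompact (Metric.closedBall (0 : ℂ) 1 ×ˢ Metric.closedBall (0 : ℂ) 1) :=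
    (isCompact_closedBall _ _).prod (isCompact_closedBall _ _)
  have hcont : ContinuousOn (fun z : ℂ × ℂ => kstarRatio x z.1 z.2)
      (Metric.closedBall 0 1 ×ˢ Metric.closedBall 0 1) := by
    refine ContinuousOn.div (by fun_prop) (by unfold hexDen; fun_prop) ?_
    rintro z ⟨h₁, h₂⟩
    simpa using hx z.1 z.2 (by simpa using h₁) (by simpa using h₂)
  obtain ⟨ζ, ⟨h₁, h₂⟩, hmax⟩ := hK.exists_isMaxOn ⟨(0, 0), by simp⟩ hcont
  refine ⟨ζ.1, ζ.2, by simpa using h₁, by simpa using h₂, fun z₁ z₂ hz₁ hz₂ => ?_⟩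
  exact hmax (a := (z₁, z₂)) ⟨by simpa using hz₁, by simpa using hz₂⟩

lemma kstarRatio_le_Kstar (hx : x ∈ tetrablock) {z₁ z₂ : ℂ} (hz₁ : ‖z₁‖ ≤ 1) (hz₂ : ‖z₂‖ ≤ 1) :
    kstarRatio x z₁ z₂ ≤ Kstar x := by
  obtain ⟨ζ₁, ζ₂, -, -, hmax⟩ := exists_forall_kstarRatio_le hx
  have hbdd : BddAbove {r : ℝ | ∃ z₁ z₂ : ℂ, ‖z₁‖ < 1 ∧ ‖z₂‖ < 1 ∧ r = kstarRatio x z₁ z₂} := by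
    refine ⟨kstarRatio x ζ₁ ζ₂, ?_⟩
    rintro _ ⟨z₁, z₂, h₁, h₂, rfl⟩
    exact hmax z₁ z₂ h₁.le h₂.le
  by_cases h : ‖z₁‖ < 1 ∧ ‖z₂‖ < 1
  · exact le_csSup hbdd ⟨z₁, z₂, h.1, h.2, rfl⟩
  have hzero : kstarRatio x z₁ z₂ = 0 := by
    have : (1 - ‖z₁‖ ^ 2) * (1 - ‖z₂‖ ^ 2) = 0 := by
      rcases not_and_or.1 h with h₁ | h₂
      · rw [le_antisymm hz₁ (not_lt.1 h₁)]; ring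
      · rw [le_antisymm hz₂ (not_lt.1 h₂)]; ring
    simp [kstarRatio, this]
  rw [hzero]
  exact (div_nonneg (Real.sqrt_nonneg _) (norm_nonneg _)).trans
    (le_csSup hbdd ⟨0, 0, by simp, by simp, rfl⟩)

lemma exists_kstarRatio_eq_Kstar (hx : x ∈ tetrablock) :
    ∃ ζ₁ ζ₂ : ℂ, ‖ζ₁‖ ≤ 1 ∧ ‖ζ₂‖ ≤ 1 ∧ kstarRatio x ζ₁ ζ₂ = Kstar x := by
  obtain ⟨ζ₁, ζ₂, hζ₁, hζ₂, hmax⟩ := exists_forall_kstarRatio_le hx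
  refine ⟨ζ₁, ζ₂, hζ₁, hζ₂, le_antisymm (kstarRatio_le_Kstar hx hζ₁ hζ₂) ?_⟩
  refine csSup_le ⟨_, 0, 0, by simp, by simp, rfl⟩ ?_
  rintro _ ⟨z₁, z₂, h₁, h₂, rfl⟩
  exact hmax z₁ z₂ h₁.le h₂.le

end

lemma mem_tetrablock_and_norm_mul_Kstar_lt_one_iff (x : ℂ × ℂ × ℂ) (a : ℂ) :
    x ∈ tetrablock ∧ ‖a‖ * Kstar x < 1 ↔ ∀ z₁ z₂ w : ℂ, ‖z₁‖ ≤ 1 → ‖z₂‖ ≤ 1 →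
      ‖w‖ ≤ Real.sqrt ((1 - ‖z₁‖ ^ 2) * (1 - ‖z₂‖ ^ 2)) → hexDen x z₁ z₂ ≠ a * w := by
  constructor
  · rintro ⟨hx, h⟩ z₁ z₂ w hz₁ hz₂ hw heq
    have hpos : 0 < ‖hexDen x z₁ z₂‖ := norm_pos_iff.2 (hx z₁ z₂ hz₁ hz₂)
    have hK := kstarRatio_le_Kstar hx hz₁ hz₂
    rw [kstarRatio, div_le_iff₀ hpos] at hK
    have : ‖hexDen x z₁ z₂‖ < ‖hexDen x z₁ z₂‖ :=
      calc ‖hexDen x z₁ z₂‖ = ‖a‖ * ‖w‖ := by rw [heq, norm_mul]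
        _ ≤ ‖a‖ * (Kstar x * ‖hexDen x z₁ z₂‖) := by gcongr; exact hw.trans hK
        _ < 1 * ‖hexDen x z₁ z₂‖ := by rw [← mul_assoc]; gcongr
        _ = ‖hexDen x z₁ z₂‖ := one_mul _
    exact this.false
  · intro h
    have hx : x ∈ tetrablock := fun z₁ z₂ hz₁ hz₂ => by
      simpa using h z₁ z₂ 0 hz₁ hz₂ (by simp)
    refine ⟨hx, ?_⟩
    by_contra! hK
    obtain ⟨ζ₁, ζ₂, hζ₁, hζ₂, hζ⟩ := exists_kstarRatio_eq_Kstar hx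
    have hpos : 0 < ‖hexDen x ζ₁ ζ₂‖ := norm_pos_iff.2 (hx ζ₁ ζ₂ hζ₁ hζ₂)
    have ha : a ≠ 0 := by rintro rfl; norm_num at hK
    refine h ζ₁ ζ₂ (hexDen x ζ₁ ζ₂ / a) hζ₁ hζ₂ ?_ (mul_div_cancel₀ _ ha).symm
    rw [← hζ, kstarRatio, mul_div_assoc', le_div_iff₀ hpos, one_mul] at hK
    rw [norm_div, div_le_iff₀ (norm_pos_iff.2 ha), mul_comm]
    exact hK

/-- Characterizations of `μ_hexa(A) < 1`. -/
theorem stmt3 (A : Matrix (Fin 2) (Fin 2) ℂ) :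
    List.TFAE [
      muHexa A < 1,
      ∀ z₁ z₂ w : ℂ, ‖z₁‖ ≤ 1 → ‖z₂‖ ≤ 1 → ‖w‖ ≤ 1 →
        ‖w‖ ≤ Real.sqrt ((1 - ‖z₁‖ ^ 2) * (1 - ‖z₂‖ ^ 2)) →
        1 - A 0 0 * z₁ - A 1 1 * z₂ + A.det * z₁ * z₂ ≠ A 1 0 * w,
      (A 0 0, A 1 1, A.det) ∈ tetrablock ∧
        supPsi (A 1 0, A 0 0, A 1 1, A.det) < 1,
      (A 0 0, A 1 1, A.det) ∈ tetrablock ∧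
        ‖A 1 0‖ * Kstar (A 0 0, A 1 1, A.det) < 1 ] := by
  have hμ := muHexa_lt_one_iff_forall_hexDen_ne A
  tfae_have 1 ↔ 4 :=
    hμ.trans (mem_tetrablock_and_norm_mul_Kstar_lt_one_iff (A 0 0, A 1 1, A.det) (A 1 0)).symm
  tfae_have 3 ↔ 4 := by rw [supPsi_eq_norm_mul_Kstar]
  tfae_have 1 ↔ 2 := by
    rw [hμ]
    refine forall₃_congr fun z₁ z₂ w => ⟨fun h hz₁ hz₂ _ => h hz₁ hz₂, fun h hz₁ hz₂ hw => ?_⟩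
    exact h hz₁ hz₂ (hw.trans (sqrt_one_sub_sq_mul_one_sub_sq_le_one
      (pow_le_one₀ (norm_nonneg _) hz₁) _)) hw
  tfae_finish
end
end

section
/- Let (a, x₁, x₂, x₃) ∈ ℂ⁴ and set β = 1 − |x₁|² − |x₂|² + |x₃|² and δ = |x₁x₂ − x₃|. Then (a, x₁, x₂, x₃) ∈ ℍ_N if and only if (x₁, x₂, x₃) ∈ 𝔼 and one of the following holds: (i) a = 0 and x₃ = x₁x₂; (ii) a ≠ 0 and β − √(β² − 4δ²) < 2|a|² < β + √(β² − 4δ²). (For (x₁,x₂,x₃) ∈ 𝔼 one has β² − 4δ² > 0.) -/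
noncomputable section

open Complex

/-! For `A = !![x₁, b; a, x₂]`, `‖A‖ < 1` iff the Hermitian matrix `1 - Aᴴ A` has positive trace
`2 - Σ |aᵢⱼ|²` and positive determinant `1 - Σ |aᵢⱼ|² + |det A|²`. With `x₃ = det A = x₁x₂ - ba`
and `δ = |a| |b|`, for `a ≠ 0` the determinant condition reads `|a|⁴ - β |a|² + δ² < 0`, i.e.
`2|a|²` lies strictly between the roots `β ± √(β² - 4δ²)`; for `a = 0` one has `x₃ = x₁x₂` and may
take `A` diagonal. On the tetrablock `|x₁|, |x₂|, |x₃| < 1`, which makes the trace condition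
automatic. The point `(a₁₁, a₂₂, det A)` lies in the tetrablock because
`1 - x₁z₁ - x₂z₂ + x₃z₁z₂ = det (1 - A diag(z₁, z₂))` cannot vanish when `‖A‖ < 1`, and
`β² > 4δ²` follows from the tetrablock estimate `2 |x₂ - x̄₁x₃| < 1 + |x₂|² - |x₁|² - |x₃|²`. -/

open ComplexConjugate Matrix

theorem ContinuousLinearMap.opNorm_le_sqrt_of_norm_sq_le {𝕜 E F : Type*}
    [NontriviallyNormedField 𝕜] [SeminormedAddCommGroup E] [SeminormedAddCommGroup F]
    [NormedSpace 𝕜 E] [NormedSpace 𝕜 F] (f : E →L[𝕜] F) {c : ℝ}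
    (h : ∀ v, ‖f v‖ ^ 2 ≤ c * ‖v‖ ^ 2) : ‖f‖ ≤ √c := by
  refine f.opNorm_le_bound (Real.sqrt_nonneg c) fun v => ?_
  rw [← Real.sqrt_sq (norm_nonneg (f v)), ← Real.sqrt_sq (norm_nonneg v),
    ← Real.sqrt_mul' c (sq_nonneg _)]
  exact Real.sqrt_le_sqrt (h v)

theorem Matrix.det_one_sub_mul_ne_zero {n : Type*} [Fintype n] [DecidableEq n]
    {A Z : Matrix n n ℂ} (hA : ‖toEuclideanCLM (𝕜 := ℂ) A‖ < 1)
    (hZ : ‖toEuclideanCLM (𝕜 := ℂ) Z‖ ≤ 1) : (1 - A * Z).det ≠ 0 := by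
  have hAZ : ‖toEuclideanCLM (𝕜 := ℂ) (A * Z)‖ < 1 := by
    rw [map_mul]
    exact (norm_mul_le _ _).trans_lt (mul_lt_one_of_nonneg_of_lt_one_left (norm_nonneg _) hA hZ)
  have hunit := isUnit_one_sub_of_norm_lt_one hAZ
  rw [← map_one (toEuclideanCLM (𝕜 := ℂ) (n := n)), ← map_sub, isUnit_map_iff] at hunit
  exact ((isUnit_iff_isUnit_det _).mp hunit).ne_zero

theorem norm_sq_sub_norm_toEuclideanCLM_fin_two_sq (x₁ b a x₂ : ℂ)
    (v : EuclideanSpace ℂ (Fin 2)) :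
    ‖v‖ ^ 2 - ‖toEuclideanCLM (𝕜 := ℂ) !![x₁, b; a, x₂] v‖ ^ 2 =
      (1 - ‖x₁‖ ^ 2 - ‖a‖ ^ 2) * ‖v 0‖ ^ 2 + (1 - ‖b‖ ^ 2 - ‖x₂‖ ^ 2) * ‖v 1‖ ^ 2
        - 2 * ((conj x₁ * b + conj a * x₂) * (conj (v 0) * v 1)).re := by
  simp only [EuclideanSpace.norm_sq_eq, Fin.sum_univ_two, ofLp_toEuclideanCLM, mulVec,
    dotProduct, Complex.sq_norm, Complex.normSq_apply, of_apply, cons_val', cons_val_zero,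
    cons_val_fin_one, cons_val_one, add_re, mul_re, add_im, mul_im, conj_re, conj_im]
  ring

theorem le_quadratic_of_add_pos {α γ μ : ℝ} (hαγ : 0 < α + γ) (t u : ℝ) :
    (α * γ - μ ^ 2) / (α + γ) * (t ^ 2 + u ^ 2) ≤ α * t ^ 2 + γ * u ^ 2 - 2 * μ * t * u := by
  rw [div_mul_eq_mul_div, div_le_iff₀ hαγ]
  nlinarith [sq_nonneg (α * t - μ * u), sq_nonneg (γ * u - μ * t)]

theorem sub_sqrt_lt_and_lt_add_sqrt_iff (β c t : ℝ) :
    (β - √(β ^ 2 - 4 * c) < 2 * t ∧ 2 * t < β + √(β ^ 2 - 4 * c)) ↔ t ^ 2 - β * t + c < 0 := by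
  have hroots : (β - √(β ^ 2 - 4 * c) < 2 * t ∧ 2 * t < β + √(β ^ 2 - 4 * c)) ↔
      |2 * t - β| < √(β ^ 2 - 4 * c) := by
    rw [abs_sub_lt_iff]
    constructor <;> rintro ⟨h₁, h₂⟩ <;> constructor <;> linarith
  rw [hroots, Real.lt_sqrt (abs_nonneg _), sq_abs]
  constructor <;> intro h <;> nlinarith

section FinTwo

variable {x₁ b a x₂ : ℂ}

theorem gram_pos_of_opNorm2_lt_one (h : opNorm2 !![x₁, b; a, x₂] < 1) :
    0 < 1 - ‖x₁‖ ^ 2 - ‖a‖ ^ 2 ∧ 0 < 1 - ‖b‖ ^ 2 - ‖x₂‖ ^ 2 ∧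
      ‖conj x₁ * b + conj a * x₂‖ ^ 2 < (1 - ‖x₁‖ ^ 2 - ‖a‖ ^ 2) * (1 - ‖b‖ ^ 2 - ‖x₂‖ ^ 2) := by
  have hdefect (v : EuclideanSpace ℂ (Fin 2)) (hv : v ≠ 0) :
      0 < ‖v‖ ^ 2 - ‖toEuclideanCLM (𝕜 := ℂ) !![x₁, b; a, x₂] v‖ ^ 2 := by
    have := ((toEuclideanCLM (𝕜 := ℂ) !![x₁, b; a, x₂]).le_opNorm v).trans_lt
      (mul_lt_of_lt_one_left (norm_pos_iff.2 hv) h)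
    nlinarith [norm_nonneg (toEuclideanCLM (𝕜 := ℂ) !![x₁, b; a, x₂] v)]
  have hform (v₀ v₁ : ℂ) (hv : ![v₀, v₁] ≠ 0) :
      0 < (1 - ‖x₁‖ ^ 2 - ‖a‖ ^ 2) * ‖v₀‖ ^ 2 + (1 - ‖b‖ ^ 2 - ‖x₂‖ ^ 2) * ‖v₁‖ ^ 2
        - 2 * ((conj x₁ * b + conj a * x₂) * (conj v₀ * v₁)).re := by
    have := hdefect (WithLp.toLp 2 ![v₀, v₁]) (by simpa using hv)
    rwa [norm_sq_sub_norm_toEuclideanCLM_fin_two_sq, PiLp.toLp_apply, PiLp.toLp_apply,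
      cons_val_zero, cons_val_one, cons_val_zero] at this
  have hα : 0 < 1 - ‖x₁‖ ^ 2 - ‖a‖ ^ 2 := by simpa using hform 1 0 (by simp)
  have hγ : 0 < 1 - ‖b‖ ^ 2 - ‖x₂‖ ^ 2 := by simpa using hform 0 1 (by simp)
  refine ⟨hα, hγ, ?_⟩
  set γ := 1 - ‖b‖ ^ 2 - ‖x₂‖ ^ 2
  set m := conj x₁ * b + conj a * x₂
  have hm : (m * (conj (γ : ℂ) * conj m)).re = γ * ‖m‖ ^ 2 := by
    rw [conj_ofReal, mul_left_comm, mul_conj, ← ofReal_mul, ofReal_re, normSq_eq_norm_sq]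
  -- `‖v‖² - ‖A v‖²` at `v = (γ, m̄)` is `γ (αγ - |m|²)`,
  -- where `α, γ` are the diagonal entries of `1 - Aᴴ A`
  have := hform γ (conj m) fun h0 => hγ.ne' (by simpa using congrFun h0 0)
  rw [hm, norm_real, Real.norm_of_nonneg hγ.le, Complex.norm_conj] at this
  nlinarith

theorem opNorm2_lt_one_of_gram_pos
    (hsum : 0 < (1 - ‖x₁‖ ^ 2 - ‖a‖ ^ 2) + (1 - ‖b‖ ^ 2 - ‖x₂‖ ^ 2))
    (hdet : ‖conj x₁ * b + conj a * x₂‖ ^ 2 <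
      (1 - ‖x₁‖ ^ 2 - ‖a‖ ^ 2) * (1 - ‖b‖ ^ 2 - ‖x₂‖ ^ 2)) :
    opNorm2 !![x₁, b; a, x₂] < 1 := by
  set m := conj x₁ * b + conj a * x₂
  set ε := ((1 - ‖x₁‖ ^ 2 - ‖a‖ ^ 2) * (1 - ‖b‖ ^ 2 - ‖x₂‖ ^ 2) - ‖m‖ ^ 2) /
    ((1 - ‖x₁‖ ^ 2 - ‖a‖ ^ 2) + (1 - ‖b‖ ^ 2 - ‖x₂‖ ^ 2))
  have hε : 0 < ε := div_pos (by linarith) hsum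
  have hbound (v : EuclideanSpace ℂ (Fin 2)) :
      ‖toEuclideanCLM (𝕜 := ℂ) !![x₁, b; a, x₂] v‖ ^ 2 ≤ (1 - ε) * ‖v‖ ^ 2 := by
    have hre : (m * (conj (v 0) * v 1)).re ≤ ‖m‖ * (‖v 0‖ * ‖v 1‖) :=
      (re_le_norm _).trans_eq (by rw [norm_mul, norm_mul, Complex.norm_conj])
    have hquad := le_quadratic_of_add_pos (μ := ‖m‖) hsum ‖v 0‖ ‖v 1‖
    have hv : ‖v‖ ^ 2 = ‖v 0‖ ^ 2 + ‖v 1‖ ^ 2 := by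
      rw [EuclideanSpace.norm_sq_eq, Fin.sum_univ_two]
    have := norm_sq_sub_norm_toEuclideanCLM_fin_two_sq x₁ b a x₂ v
    nlinarith
  calc opNorm2 !![x₁, b; a, x₂] ≤ √(1 - ε) :=
        ContinuousLinearMap.opNorm_le_sqrt_of_norm_sq_le _ hbound
    _ < 1 := (Real.sqrt_lt' one_pos).2 (by linarith)

theorem opNorm2_fin_two_lt_one_iff :
    opNorm2 !![x₁, b; a, x₂] < 1 ↔
      0 < 2 - (‖x₁‖ ^ 2 + ‖x₂‖ ^ 2 + ‖a‖ ^ 2 + ‖b‖ ^ 2) ∧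
        0 < 1 - (‖x₁‖ ^ 2 + ‖x₂‖ ^ 2 + ‖a‖ ^ 2 + ‖b‖ ^ 2) + ‖x₁ * x₂ - b * a‖ ^ 2 := by
  have hgram : (1 - ‖x₁‖ ^ 2 - ‖a‖ ^ 2) * (1 - ‖b‖ ^ 2 - ‖x₂‖ ^ 2)
      - ‖conj x₁ * b + conj a * x₂‖ ^ 2
      = 1 - (‖x₁‖ ^ 2 + ‖x₂‖ ^ 2 + ‖a‖ ^ 2 + ‖b‖ ^ 2) + ‖x₁ * x₂ - b * a‖ ^ 2 := by
    simp only [Complex.sq_norm, normSq_apply, add_re, add_im, sub_re, sub_im, mul_re, mul_im,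
      conj_re, conj_im]
    ring
  constructor
  · intro h
    obtain ⟨hα, hγ, hm⟩ := gram_pos_of_opNorm2_lt_one h
    constructor <;> linarith
  · rintro ⟨htrace, hdet⟩
    exact opNorm2_lt_one_of_gram_pos (by linarith) (by linarith)

end FinTwo

theorem opNorm2_diagonal_le_one {z₁ z₂ : ℂ} (h₁ : ‖z₁‖ ≤ 1) (h₂ : ‖z₂‖ ≤ 1) :
    opNorm2 !![z₁, 0; 0, z₂] ≤ 1 := by
  rw [← Real.sqrt_one]
  refine ContinuousLinearMap.opNorm_le_sqrt_of_norm_sq_le _ fun v => ?_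
  have hdefect := norm_sq_sub_norm_toEuclideanCLM_fin_two_sq z₁ 0 0 z₂ v
  simp only [norm_zero, mul_zero, map_zero, zero_mul, add_zero, zero_re, sub_zero] at hdefect
  have h₁' : ‖z₁‖ ^ 2 ≤ 1 := pow_le_one₀ (norm_nonneg _) h₁
  have h₂' : ‖z₂‖ ^ 2 ≤ 1 := pow_le_one₀ (norm_nonneg _) h₂
  nlinarith [mul_nonneg (sub_nonneg.2 h₁') (sq_nonneg ‖v 0‖),
    mul_nonneg (sub_nonneg.2 h₂') (sq_nonneg ‖v 1‖)]

theorem opNorm2_diagonal_lt_one {z₁ z₂ : ℂ} (h₁ : ‖z₁‖ < 1) (h₂ : ‖z₂‖ < 1) :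
    opNorm2 !![z₁, 0; 0, z₂] < 1 := by
  have h₁' := pow_lt_one₀ (norm_nonneg _) h₁ two_ne_zero
  have h₂' := pow_lt_one₀ (norm_nonneg _) h₂ two_ne_zero
  rw [opNorm2_fin_two_lt_one_iff, norm_zero, zero_mul, sub_zero, norm_mul, mul_pow]
  constructor <;> nlinarith [mul_pos (sub_pos.2 h₁') (sub_pos.2 h₂')]

theorem mem_tetrablock_of_opNorm2_lt_one {A : Matrix (Fin 2) (Fin 2) ℂ} (hA : opNorm2 A < 1) :
    (A 0 0, A 1 1, A.det) ∈ tetrablock := by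
  intro z₁ z₂ h₁ h₂
  have hden : hexDen (A 0 0, A 1 1, A.det) z₁ z₂ = (1 - A * !![z₁, 0; 0, z₂]).det := by
    simp only [hexDen, det_fin_two, Matrix.sub_apply, one_apply_eq, one_apply_ne zero_ne_one,
      one_apply_ne one_ne_zero, mul_apply, Fin.sum_univ_two, of_apply, cons_val', cons_val_zero,
      cons_val_one, cons_val_fin_one]
    ring
  rw [hden]
  exact det_one_sub_mul_ne_zero hA (opNorm2_diagonal_le_one h₁ h₂)

theorem mem_hexN_iff {a x₁ x₂ x₃ : ℂ} :
    (a, x₁, x₂, x₃) ∈ hexN ↔ ∃ b, opNorm2 !![x₁, b; a, x₂] < 1 ∧ x₃ = x₁ * x₂ - b * a := by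
  constructor
  · rintro ⟨A, hA, hπ⟩
    simp only [piMap, Prod.mk.injEq] at hπ
    obtain ⟨rfl, rfl, rfl, rfl⟩ := hπ
    exact ⟨A 0 1, by rwa [← eta_fin_two A], det_fin_two A⟩
  · rintro ⟨b, hA, rfl⟩
    exact ⟨_, hA, by simp [piMap, det_fin_two]⟩

theorem norm_lt_norm_of_forall_sub_mul_ne_zero {p q : ℂ}
    (h : ∀ w : ℂ, ‖w‖ ≤ 1 → p - q * w ≠ 0) : ‖q‖ < ‖p‖ := by
  by_contra! hpq
  rcases eq_or_ne q 0 with rfl | hq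
  · exact h 0 (by simp) (by simpa using hpq)
  · refine h (p / q) ?_ (by rw [mul_div_cancel₀ p hq, sub_self])
    rw [norm_div]
    exact div_le_one_of_le₀ hpq (norm_nonneg q)

theorem exists_norm_eq_one_mul_eq_norm (v : ℂ) : ∃ z : ℂ, ‖z‖ = 1 ∧ v * z = ‖v‖ := by
  refine ⟨cexp (↑(-arg v) * I), norm_exp_ofReal_mul_I _, ?_⟩
  conv_lhs => rw [← norm_mul_exp_arg_mul_I v]
  rw [mul_assoc, ← Complex.exp_add]
  simp

section Tetrablock

variable {x₁ x₂ x₃ : ℂ}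

theorem mem_tetrablock_swap (hx : (x₁, x₂, x₃) ∈ tetrablock) : (x₂, x₁, x₃) ∈ tetrablock :=
  fun z₁ z₂ h₁ h₂ => by
    convert hx z₂ z₁ h₂ h₁ using 1
    simp only [hexDen]
    ring

theorem norm_sub_mul_lt_of_mem_tetrablock (hx : (x₁, x₂, x₃) ∈ tetrablock) {z : ℂ}
    (hz : ‖z‖ ≤ 1) : ‖x₁ - x₃ * z‖ < ‖1 - x₂ * z‖ :=
  norm_lt_norm_of_forall_sub_mul_ne_zero fun w hw => by
    convert hx w z hw hz using 1
    simp only [hexDen]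
    ring

theorem norm_fst_lt_one_of_mem_tetrablock (hx : (x₁, x₂, x₃) ∈ tetrablock) : ‖x₁‖ < 1 := by
  simpa using norm_sub_mul_lt_of_mem_tetrablock hx (z := 0) (by simp)

theorem two_mul_norm_lt_of_mem_tetrablock (hx : (x₁, x₂, x₃) ∈ tetrablock) :
    2 * ‖x₂ - conj x₁ * x₃‖ < 1 + ‖x₂‖ ^ 2 - ‖x₁‖ ^ 2 - ‖x₃‖ ^ 2 := by
  obtain ⟨z, hz, hvz⟩ := exists_norm_eq_one_mul_eq_norm (x₂ - conj x₁ * x₃)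
  have hlt := norm_sub_mul_lt_of_mem_tetrablock hx hz.le
  have hsq : ‖x₁ - x₃ * z‖ ^ 2 < ‖1 - x₂ * z‖ ^ 2 := by gcongr
  have hz' : z.re * z.re + z.im * z.im = 1 := by
    rw [← normSq_apply, ← Complex.sq_norm, hz, one_pow]
  have hexpand : ‖1 - x₂ * z‖ ^ 2 - ‖x₁ - x₃ * z‖ ^ 2
      = 1 + ‖x₂‖ ^ 2 - ‖x₁‖ ^ 2 - ‖x₃‖ ^ 2 - 2 * ((x₂ - conj x₁ * x₃) * z).re := by
    simp only [Complex.sq_norm, normSq_apply, sub_re, sub_im, mul_re, mul_im, conj_re, conj_im,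
      one_re, one_im]
    linear_combination (x₂.re * x₂.re + x₂.im * x₂.im - x₃.re * x₃.re - x₃.im * x₃.im) * hz'
  rw [hvz, ofReal_re] at hexpand
  linarith

theorem norm_thd_lt_one_of_mem_tetrablock (hx : (x₁, x₂, x₃) ∈ tetrablock) : ‖x₃‖ < 1 := by
  have h₁ := two_mul_norm_lt_of_mem_tetrablock hx
  have h₂ := two_mul_norm_lt_of_mem_tetrablock (mem_tetrablock_swap hx)
  nlinarith [norm_nonneg (x₂ - conj x₁ * x₃), norm_nonneg (x₁ - conj x₂ * x₃), norm_nonneg x₃]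

theorem discr_pos_of_mem_tetrablock (hx : (x₁, x₂, x₃) ∈ tetrablock) :
    0 < (1 - ‖x₁‖ ^ 2 - ‖x₂‖ ^ 2 + ‖x₃‖ ^ 2) ^ 2 - 4 * ‖x₁ * x₂ - x₃‖ ^ 2 := by
  have hlt := two_mul_norm_lt_of_mem_tetrablock hx
  have hid : ‖x₂ - conj x₁ * x₃‖ ^ 2 - ‖x₁ * x₂ - x₃‖ ^ 2
      = (‖x₂‖ ^ 2 - ‖x₃‖ ^ 2) * (1 - ‖x₁‖ ^ 2) := by
    simp only [Complex.sq_norm, normSq_apply, sub_re, sub_im, mul_re, mul_im, conj_re, conj_im]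
    ring
  nlinarith [norm_nonneg (x₂ - conj x₁ * x₃)]

end Tetrablock

/-- Characterization of membership in `ℍ_N`. -/
theorem stmt9 (a x₁ x₂ x₃ : ℂ) (β δ : ℝ)
    (hβ : β = 1 - ‖x₁‖ ^ 2 - ‖x₂‖ ^ 2 + ‖x₃‖ ^ 2)
    (hδ : δ = ‖x₁ * x₂ - x₃‖) :
    ((x₁, x₂, x₃) ∈ tetrablock → 0 < β ^ 2 - 4 * δ ^ 2) ∧
    ((a, x₁, x₂, x₃) ∈ hexN ↔
      ((x₁, x₂, x₃) ∈ tetrablock ∧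
        ((a = 0 ∧ x₃ = x₁ * x₂) ∨
          (a ≠ 0 ∧ β - Real.sqrt (β ^ 2 - 4 * δ ^ 2) < 2 * ‖a‖ ^ 2 ∧
            2 * ‖a‖ ^ 2 < β + Real.sqrt (β ^ 2 - 4 * δ ^ 2))))) := by
  subst hβ hδ
  refine ⟨discr_pos_of_mem_tetrablock, ?_⟩
  rw [mem_hexN_iff]
  constructor
  · rintro ⟨b, hA, rfl⟩
    obtain ⟨-, hdet⟩ := opNorm2_fin_two_lt_one_iff.1 hA
    refine ⟨by simpa [det_fin_two] using mem_tetrablock_of_opNorm2_lt_one hA, ?_⟩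
    rcases eq_or_ne a 0 with rfl | ha
    · simp
    refine Or.inr ⟨ha, (sub_sqrt_lt_and_lt_add_sqrt_iff _ _ _).2 ?_⟩
    rw [sub_sub_cancel, norm_mul]
    nlinarith [mul_pos (by positivity : 0 < ‖a‖ ^ 2) hdet]
  · rintro ⟨hx, ⟨rfl, rfl⟩ | ⟨ha, hroots⟩⟩
    · exact ⟨0, opNorm2_diagonal_lt_one (norm_fst_lt_one_of_mem_tetrablock hx)
        (norm_fst_lt_one_of_mem_tetrablock (mem_tetrablock_swap hx)), by ring⟩
    · obtain ⟨b, hba⟩ : ∃ b, b * a = x₁ * x₂ - x₃ := ⟨_, div_mul_cancel₀ _ ha⟩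
      refine ⟨b, opNorm2_fin_two_lt_one_iff.2 ?_, by rw [hba]; ring⟩
      have hquad := (sub_sqrt_lt_and_lt_add_sqrt_iff _ _ _).1 hroots
      rw [← hba, norm_mul] at hquad
      have hdet : 0 < 1 - ‖x₁‖ ^ 2 - ‖x₂‖ ^ 2 + ‖x₃‖ ^ 2 - ‖a‖ ^ 2 - ‖b‖ ^ 2 :=
        pos_of_mul_pos_right (a := ‖a‖ ^ 2) (by nlinarith) (sq_nonneg _)
      have h₃ := pow_lt_one₀ (norm_nonneg _) (norm_thd_lt_one_of_mem_tetrablock hx) two_ne_zero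
      rw [hba, sub_sub_cancel]
      constructor <;> linarith
end
end
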